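/- arXiv:2312.10403 — 4 statements merged into one kernel-verified Lean document; each statement's English description precedes it below -/
import Mathlib

section
/- Let A ∈ ℝ^{m×n} and M ∈ ℝ^{n×n} symmetric positive definite, with weighted SVD Uᵀ A V = Σ and weighted singular values σ₁ ≥ … ≥ σ_r > 0, r = rank(A). Let 1 ≤ k < r. Then for every matrix X ∈ ℝ^{m×n} with rank(X) ≤ k, one has ‖A − X‖_{M,2} ≥ σ_{k+1}. -/
open Matrix

/-- Euclidean norm of a vector. -/
noncomputable def enorm {m : ℕ} (x : Fin m → ℝ) : ℝ := Real.sqrt (x ⬝ᵥ x)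

/-- M-weighted norm of a vector: ‖x‖_M = (xᵀ M x)^{1/2}. -/
noncomputable def mnorm {n : ℕ} (M : Matrix (Fin n) (Fin n) ℝ) (x : Fin n → ℝ) : ℝ :=
  Real.sqrt (x ⬝ᵥ M.mulVec x)

/-- Weighted matrix norm ‖A‖_{M,2} = sup_{x ≠ 0} ‖Ax‖₂ / ‖x‖_M. -/
noncomputable def wnorm {m n : ℕ} (A : Matrix (Fin m) (Fin n) ℝ)
    (M : Matrix (Fin n) (Fin n) ℝ) : ℝ :=
  sSup {t : ℝ | ∃ x : Fin n → ℝ, x ≠ 0 ∧ t = _root_.enorm (A.mulVec x) / mnorm M x}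

/-- The m×n "diagonal" matrix with entries σ₁,…,σ_r on the leading diagonal and zeros elsewhere. -/
noncomputable def wsvdSigma (m n r : ℕ) (σ : Fin r → ℝ) : Matrix (Fin m) (Fin n) ℝ :=
  Matrix.of fun i j => if h : (i : ℕ) = (j : ℕ) ∧ (i : ℕ) < r then σ ⟨i, h.2⟩ else 0

lemma dot_self_eq_sum_sq {m : ℕ} (x : Fin m → ℝ) : x ⬝ᵥ x = ∑ i, x i ^ 2 := by
  simp [dotProduct, sq]

lemma enorm_nonneg {m : ℕ} (x : Fin m → ℝ) : 0 ≤ _root_.enorm x := Real.sqrt_nonneg _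

lemma enorm_pos_fin {m : ℕ} {x : Fin m → ℝ} (hx : x ≠ 0) : 0 < _root_.enorm x := by
  rw [_root_.enorm, dot_self_eq_sum_sq]
  apply Real.sqrt_pos.2
  obtain ⟨i, hi⟩ := Function.ne_iff.1 hx
  exact Finset.sum_pos' (fun j _ => sq_nonneg _)
    ⟨i, Finset.mem_univ i, by rw [← sq_abs]; exact pow_pos (abs_pos.2 hi) 2⟩

lemma enorm_mulVec_le {a b : ℕ} (P : Matrix (Fin a) (Fin b) ℝ) (y : Fin b → ℝ) :
    _root_.enorm (P *ᵥ y) ≤ Real.sqrt (∑ i, ∑ j, (P i j)^2) * _root_.enorm y := by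
  rw [_root_.enorm, _root_.enorm, ← Real.sqrt_mul (by positivity)]
  apply Real.sqrt_le_sqrt
  rw [dot_self_eq_sum_sq, dot_self_eq_sum_sq, Finset.sum_mul]
  apply Finset.sum_le_sum
  intro i _
  have h1 : (P *ᵥ y) i = ∑ j, P i j * y j := rfl
  rw [h1]
  exact Finset.sum_mul_sq_le_sq_mul_sq _ _ _

lemma exists_ker {a b : ℕ} (Y : Matrix (Fin a) (Fin b) ℝ) (h : Y.rank < b) :
    ∃ c : Fin b → ℝ, c ≠ 0 ∧ Y *ᵥ c = 0 := by
  have hk : LinearMap.ker Y.mulVecLin ≠ ⊥ := by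
    intro hker
    have h2 := LinearMap.finrank_range_add_finrank_ker Y.mulVecLin
    rw [hker, finrank_bot, add_zero, Module.finrank_fin_fun] at h2
    rw [Matrix.rank, h2] at h
    exact lt_irrefl _ h
  obtain ⟨c, hc, hc0⟩ := Submodule.exists_mem_ne_zero_of_ne_bot hk
  exact ⟨c, hc0, hc⟩

lemma sum_eq_sum_castLE {a b : ℕ} (h : a ≤ b) (f : Fin b → ℝ)
    (hf : ∀ j : Fin b, a ≤ (j:ℕ) → f j = 0) :
    ∑ j : Fin b, f j = ∑ l : Fin a, f (Fin.castLE h l) := by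
  have h1 : ∑ l : Fin a, f (Fin.castLE h l)
      = ∑ x ∈ Finset.univ.map (Fin.castLEEmb h), f x := by
    rw [Finset.sum_map]
    rfl
  rw [h1]
  symm
  apply Finset.sum_subset (Finset.subset_univ _)
  intro x _ hx
  apply hf
  by_contra hlt
  push_neg at hlt
  exact hx (Finset.mem_map.2 ⟨⟨(x:ℕ), hlt⟩, Finset.mem_univ _, Fin.ext rfl⟩)

theorem stmt_7 {m n r : ℕ} (A : Matrix (Fin m) (Fin n) ℝ) (M : Matrix (Fin n) (Fin n) ℝ)
    (hM : M.PosDef) (U : Matrix (Fin m) (Fin m) ℝ) (V : Matrix (Fin n) (Fin n) ℝ)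
    (σ : Fin r → ℝ) (hr : r = A.rank) (hrm : r ≤ m) (hrn : r ≤ n)
    (hU : Uᵀ * U = 1) (hV : Vᵀ * M * V = 1)
    (hσpos : ∀ i, 0 < σ i) (hσmono : ∀ i j : Fin r, i ≤ j → σ j ≤ σ i)
    (hSVD : Uᵀ * A * V = wsvdSigma m n r σ)
    (k : ℕ) (hk1 : 1 ≤ k) (hkr : k < r) :
    ∀ X : Matrix (Fin m) (Fin n) ℝ, X.rank ≤ k → σ ⟨k, hkr⟩ ≤ wnorm (A - X) M := by
  intro X hX
  have hk1r : k + 1 ≤ r := hkr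
  have hkn : k + 1 ≤ n := le_trans hk1r hrn
  have hkm : k + 1 ≤ m := le_trans hk1r hrm
  -- V is invertible
  have hdetV : IsUnit V.det := by
    have h1 := congrArg Matrix.det hV
    rw [Matrix.det_mul, Matrix.det_mul, Matrix.det_transpose, Matrix.det_one] at h1
    exact IsUnit.of_mul_eq_one (a := V.det) (M.det * V.det) (by rw [← mul_assoc]; exact h1)
  set W := V⁻¹ with hWdef
  have hWV : W * V = 1 := Matrix.nonsing_inv_mul V hdetV
  have hVW : V * W = 1 := Matrix.mul_nonsing_inv V hdetV
  have hUUT : U * Uᵀ = 1 := mul_eq_one_comm.1 hU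
  have hAV : A * V = U * wsvdSigma m n r σ := by
    calc A * V = (U * Uᵀ) * (A * V) := by rw [hUUT, Matrix.one_mul]
      _ = U * (Uᵀ * A * V) := by simp only [Matrix.mul_assoc]
      _ = U * wsvdSigma m n r σ := by rw [hSVD]
  have hM' : M = Wᵀ * W := by
    have hWtVt : Wᵀ * Vᵀ = 1 := by rw [← Matrix.transpose_mul, hVW, Matrix.transpose_one]
    calc M = (Wᵀ * Vᵀ) * M * (V * W) := by rw [hWtVt, hVW, Matrix.one_mul, Matrix.mul_one]
      _ = Wᵀ * (Vᵀ * M * V) * W := by simp only [Matrix.mul_assoc]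
      _ = Wᵀ * W := by rw [hV, Matrix.mul_one]
  have hmn : ∀ x : Fin n → ℝ, mnorm M x = _root_.enorm (W *ᵥ x) := by
    intro x
    rw [mnorm, _root_.enorm]
    congr 1
    rw [hM', ← Matrix.mulVec_mulVec, Matrix.dotProduct_mulVec, Matrix.vecMul_transpose]
  have hUe : ∀ z : Fin m → ℝ, _root_.enorm (U *ᵥ z) = _root_.enorm z := by
    intro z
    rw [_root_.enorm, _root_.enorm]
    congr 1
    rw [Matrix.dotProduct_mulVec, ← Matrix.mulVec_transpose, Matrix.mulVec_mulVec, hU,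
      Matrix.one_mulVec]
  -- kernel vector
  set E : Matrix (Fin n) (Fin (k+1)) ℝ := Matrix.of fun j l => if (j:ℕ) = (l:ℕ) then 1 else 0
    with hE
  have hrankY : (X * V * E).rank < k + 1 := by
    calc (X * V * E).rank ≤ (X * V).rank := Matrix.rank_mul_le_left _ _
      _ ≤ X.rank := Matrix.rank_mul_le_left _ _
      _ ≤ k := hX
      _ < k + 1 := Nat.lt_succ_self k
  obtain ⟨c, hc0, hYc⟩ := exists_ker _ hrankY
  set p : Fin n → ℝ := E *ᵥ c with hp
  have hpj : ∀ j : Fin n, p j = if h : (j:ℕ) < k+1 then c ⟨j, h⟩ else 0 := by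
    intro j
    show (∑ l, E j l * c l) = _
    by_cases h : (j:ℕ) < k + 1
    · rw [dif_pos h, Finset.sum_eq_single ⟨(j:ℕ), h⟩]
      · simp [hE]
      · intro l _ hl
        have hne : (j:ℕ) ≠ (l:ℕ) := fun hh => hl (Fin.ext hh.symm)
        simp [hE, hne]
      · intro hj; exact absurd (Finset.mem_univ _) hj
    · rw [dif_neg h]
      apply Finset.sum_eq_zero
      intro l _
      have hne : (j:ℕ) ≠ (l:ℕ) := fun hh => h (hh ▸ l.isLt)
      simp [hE, hne]
  have hp0 : p ≠ 0 := by
    intro h0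
    apply hc0
    funext l
    have h1 := congrFun h0 (Fin.castLE hkn l)
    rw [hpj] at h1
    rw [dif_pos (show ((Fin.castLE hkn l : Fin n) : ℕ) < k + 1 from l.isLt)] at h1
    simpa using h1
  set q : Fin m → ℝ := wsvdSigma m n r σ *ᵥ p with hq
  have hqi : ∀ i : Fin m,
      q i = if h : (i:ℕ) < k+1 then σ ⟨i, lt_of_lt_of_le h hk1r⟩ * c ⟨i, h⟩ else 0 := by
    intro i
    show (∑ j, wsvdSigma m n r σ i j * p j) = _
    by_cases h : (i:ℕ) < k + 1
    · have hir : (i:ℕ) < r := lt_of_lt_of_le h hk1r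
      have hin : (i:ℕ) < n := lt_of_lt_of_le hir hrn
      rw [dif_pos h, Finset.sum_eq_single ⟨(i:ℕ), hin⟩]
      · have hSig : wsvdSigma m n r σ i ⟨(i:ℕ), hin⟩ = σ ⟨(i:ℕ), hir⟩ := by
          simp [wsvdSigma, hir]
        have hpc : p (⟨(i:ℕ), hin⟩ : Fin n) = c ⟨(i:ℕ), h⟩ := by
          rw [hpj]
          exact dif_pos h
        rw [hSig, hpc]
      · intro j _ hj
        have hne : ¬((i:ℕ) = (j:ℕ) ∧ (i:ℕ) < r) := fun hh => hj (Fin.ext hh.1.symm)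
        have h0 : wsvdSigma m n r σ i j = 0 := by
          simp only [wsvdSigma, Matrix.of_apply]
          exact dif_neg hne
        rw [h0, zero_mul]
      · intro hj; exact absurd (Finset.mem_univ _) hj
    · rw [dif_neg h]
      apply Finset.sum_eq_zero
      intro j _
      by_cases hij : (i:ℕ) = (j:ℕ) ∧ (i:ℕ) < r
      · have hc' : ¬ ((j:ℕ) < k + 1) := by rw [← hij.1]; exact h
        rw [hpj, dif_neg hc', mul_zero]
      · have h0 : wsvdSigma m n r σ i j = 0 := by
          simp only [wsvdSigma, Matrix.of_apply]
          exact dif_neg hij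
        rw [h0, zero_mul]
  have hsum_p : p ⬝ᵥ p = ∑ l : Fin (k+1), c l ^ 2 := by
    rw [dot_self_eq_sum_sq, sum_eq_sum_castLE hkn (fun j => p j ^ 2)
      (fun j hj => by show p j ^ 2 = 0; rw [hpj, dif_neg (not_lt.2 hj)]; ring)]
    apply Finset.sum_congr rfl
    intro l _
    rw [hpj, dif_pos (show ((Fin.castLE hkn l : Fin n) : ℕ) < k + 1 from l.isLt)]
    exact congrArg (fun t => t ^ 2) (congrArg c (Fin.ext rfl))
  have hsum_q : q ⬝ᵥ q = ∑ l : Fin (k+1), (σ ⟨l, lt_of_lt_of_le l.isLt hk1r⟩ * c l) ^ 2 := by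
    rw [dot_self_eq_sum_sq, sum_eq_sum_castLE hkm (fun i => q i ^ 2)
      (fun i hi => by show q i ^ 2 = 0; rw [hqi, dif_neg (not_lt.2 hi)]; ring)]
    apply Finset.sum_congr rfl
    intro l _
    rw [hqi, dif_pos (show ((Fin.castLE hkm l : Fin m) : ℕ) < k + 1 from l.isLt)]
    have e1 : (⟨((Fin.castLE hkm l : Fin m) : ℕ), lt_of_lt_of_le l.isLt hk1r⟩ : Fin r)
        = ⟨(l : ℕ), lt_of_lt_of_le l.isLt hk1r⟩ := Fin.ext rfl
    have e2 : (⟨((Fin.castLE hkm l : Fin m) : ℕ), l.isLt⟩ : Fin (k+1)) = l := Fin.ext rfl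
    rw [e1, e2]
  have hσk := hσpos ⟨k, hkr⟩
  have hqq : σ ⟨k, hkr⟩ ^ 2 * (p ⬝ᵥ p) ≤ q ⬝ᵥ q := by
    rw [hsum_p, hsum_q, Finset.mul_sum]
    apply Finset.sum_le_sum
    intro l _
    rw [mul_pow]
    apply mul_le_mul_of_nonneg_right _ (sq_nonneg _)
    apply pow_le_pow_left₀ hσk.le
    apply hσmono
    exact Fin.mk_le_mk.2 (Nat.lt_succ_iff.1 l.isLt)
  -- the witness vector
  have hXx : X *ᵥ (V *ᵥ p) = 0 := by
    rw [hp, Matrix.mulVec_mulVec, Matrix.mulVec_mulVec]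
    exact hYc
  have hWx : W *ᵥ (V *ᵥ p) = p := by
    rw [Matrix.mulVec_mulVec, hWV, Matrix.one_mulVec]
  have hx0 : V *ᵥ p ≠ 0 := by
    intro h0
    apply hp0
    rw [← hWx, h0, Matrix.mulVec_zero]
  have hAx : (A - X) *ᵥ (V *ᵥ p) = U *ᵥ q := by
    rw [Matrix.sub_mulVec, hXx, sub_zero, Matrix.mulVec_mulVec, hAV, ← Matrix.mulVec_mulVec, hq]
  have hpe : 0 < _root_.enorm p := enorm_pos_fin hp0
  have key : σ ⟨k, hkr⟩ * _root_.enorm p ≤ _root_.enorm ((A - X) *ᵥ (V *ᵥ p)) := by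
    rw [hAx, hUe]
    rw [_root_.enorm, _root_.enorm]
    calc σ ⟨k, hkr⟩ * Real.sqrt (p ⬝ᵥ p) = Real.sqrt (σ ⟨k, hkr⟩ ^ 2 * (p ⬝ᵥ p)) := by
          rw [Real.sqrt_mul (sq_nonneg _), Real.sqrt_sq hσk.le]
      _ ≤ Real.sqrt (q ⬝ᵥ q) := Real.sqrt_le_sqrt hqq
  -- boundedness of the wnorm set
  have hbdd : BddAbove {t : ℝ | ∃ y : Fin n → ℝ, y ≠ 0 ∧ t = _root_.enorm ((A - X) *ᵥ y) / mnorm M y} := by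
    refine ⟨Real.sqrt (∑ i, ∑ j, (((A - X) * V) i j) ^ 2), ?_⟩
    rintro t ⟨y, hy, rfl⟩
    have h1 : (A - X) *ᵥ y = ((A - X) * V) *ᵥ (W *ᵥ y) := by
      rw [Matrix.mulVec_mulVec, Matrix.mul_assoc, hVW, Matrix.mul_one]
    rw [h1, hmn]
    by_cases h0 : _root_.enorm (W *ᵥ y) = 0
    · rw [h0, div_zero]
      exact Real.sqrt_nonneg _
    · rw [div_le_iff₀ (lt_of_le_of_ne (enorm_nonneg _) (Ne.symm h0))]
      exact enorm_mulVec_le _ _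
  -- conclusion
  rw [wnorm]
  refine le_trans ?_ (le_csSup hbdd ⟨V *ᵥ p, hx0, rfl⟩)
  rw [hmn, hWx, le_div_iff₀ hpe]
  exact key
end

section
/- Let A ∈ ℝ^{m×n} and M ∈ ℝ^{n×n} symmetric positive definite, with weighted SVD Uᵀ A V = Σ and weighted singular values σ₁ ≥ … ≥ σ_r > 0, r = rank(A). Let 1 ≤ k < r and define A_k := Σ_{i=1}^{k} σ_i u_i v_iᵀ M, where u_i, v_i are the i-th columns of U and V. Then rank(A_k) = k and ‖A − A_k‖_{M,2} = σ_{k+1}. -/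
open Matrix Finset

-- helper: sum over Fin n of a function supported on indices < r equals sum over Fin r
lemma sum_fin_lt {α : Type*} [AddCommMonoid α] {n r : ℕ} (hrn : r ≤ n) (f : Fin r → α) :
    (∑ j : Fin n, if h : (j : ℕ) < r then f ⟨j, h⟩ else 0) = ∑ i : Fin r, f i := by
  have h1 : (∑ j : Fin n, if h : (j : ℕ) < r then f ⟨j, h⟩ else 0)
      = ∑ j ∈ Finset.range n, (fun j : ℕ => if h : j < r then f ⟨j, h⟩ else 0) j :=
    Fin.sum_univ_eq_sum_range (fun j : ℕ => if h : j < r then f ⟨j, h⟩ else 0) n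
  have h2 : (∑ i : Fin r, f i)
      = ∑ j ∈ Finset.range r, (fun j : ℕ => if h : j < r then f ⟨j, h⟩ else 0) j := by
    rw [← Fin.sum_univ_eq_sum_range (fun j : ℕ => if h : j < r then f ⟨j, h⟩ else 0)]
    exact Finset.sum_congr rfl fun i _ => by simp [i.isLt]
  rw [h1, h2]
  symm
  apply Finset.sum_subset (Finset.range_subset_range.2 hrn)
  intro j _ hj
  have : ¬ j < r := fun h => hj (Finset.mem_range.2 h)
  simp only [this, dif_neg, not_false_iff]

-- key lemma 1 : Σᵀ Σ is diagonal
lemma sigmaT_mul_sigma {m n r : ℕ} (hrm : r ≤ m) (τ : Fin r → ℝ) :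
    (wsvdSigma m n r τ)ᵀ * wsvdSigma m n r τ
      = Matrix.diagonal (fun j : Fin n => if h : (j : ℕ) < r then (τ ⟨j, h⟩)^2 else 0) := by
  ext a b
  simp only [Matrix.mul_apply, Matrix.transpose_apply, wsvdSigma, Matrix.of_apply,
    Matrix.diagonal_apply]
  rcases lt_or_ge (a : ℕ) r with har | har
  · rw [Finset.sum_eq_single (⟨(a : ℕ), lt_of_lt_of_le har hrm⟩ : Fin m)]
    · by_cases hab : a = b
      · subst hab
        simp [har, pow_two]
      · have : ((a:ℕ) = (b:ℕ)) = False := by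
          simp only [eq_iff_iff, iff_false]
          exact fun h => hab (Fin.ext h)
        simp [har, this, Ne.symm hab, hab]
    · intro i _ hi
      have : ((i:ℕ) = (a:ℕ)) = False := by
        simp only [eq_iff_iff, iff_false]
        intro h
        exact hi (Fin.ext h)
      simp [this]
    · simp
  · have hb : ∀ i : Fin m, (if h : (i:ℕ) = (a:ℕ) ∧ (i:ℕ) < r then τ ⟨i, h.2⟩ else 0) = 0 := by
      intro i
      rw [dif_neg]
      rintro ⟨h1, h2⟩
      omega
    simp only [hb, zero_mul, Finset.sum_const_zero]
    by_cases hab : a = b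
    · subst hab
      rw [if_pos rfl, dif_neg (by omega)]
    · rw [if_neg hab]

lemma usv_core {m n r : ℕ} (hrm : r ≤ m) (hrn : r ≤ n) (τ : Fin r → ℝ)
    (U : Matrix (Fin m) (Fin m) ℝ) (V : Matrix (Fin n) (Fin n) ℝ) :
    U * wsvdSigma m n r τ * Vᵀ
      = ∑ t : Fin r, τ t • vecMulVec (fun l => U l (Fin.castLE hrm t))
          (fun l => V l (Fin.castLE hrn t)) := by
  ext i j
  have hub : ∀ b : Fin n, (U * wsvdSigma m n r τ) i b
      = if h : (b : ℕ) < r then τ ⟨b, h⟩ * U i (Fin.castLE hrm ⟨b, h⟩) else 0 := by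
    intro b
    rcases lt_or_ge (b : ℕ) r with hbr | hbr
    · rw [Matrix.mul_apply, Finset.sum_eq_single (⟨(b : ℕ), lt_of_lt_of_le hbr hrm⟩ : Fin m)]
      · rw [dif_pos hbr]
        simp only [wsvdSigma, Matrix.of_apply]
        rw [dif_pos ⟨trivial, hbr⟩]
        exact mul_comm _ _
      · intro a _ ha
        simp only [wsvdSigma, Matrix.of_apply]
        rw [dif_neg, mul_zero]
        rintro ⟨h1, h2⟩
        exact ha (Fin.ext h1)
      · simp
    · rw [Matrix.mul_apply, dif_neg (by omega)]
      apply Finset.sum_eq_zero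
      intro a _
      simp only [wsvdSigma, Matrix.of_apply]
      rw [dif_neg, mul_zero]
      rintro ⟨h1, h2⟩
      omega
  rw [Matrix.mul_apply]
  simp only [hub, Matrix.transpose_apply]
  have hcongr : (∑ b : Fin n,
        (if h : (b : ℕ) < r then τ ⟨b, h⟩ * U i (Fin.castLE hrm ⟨b, h⟩) else 0) * V j b)
      = ∑ b : Fin n, if h : (b : ℕ) < r then
          (fun t : Fin r => τ t * U i (Fin.castLE hrm t) * V j (Fin.castLE hrn t)) ⟨b, h⟩
        else 0 := by
    refine Finset.sum_congr rfl fun b _ => ?_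
    by_cases h : (b : ℕ) < r
    · rw [dif_pos h, dif_pos h]
      have : (Fin.castLE hrn ⟨(b : ℕ), h⟩) = b := Fin.ext rfl
      simp only [this]
    · simp [h]
  rw [hcongr, sum_fin_lt hrn (fun t : Fin r => τ t * U i (Fin.castLE hrm t) * V j (Fin.castLE hrn t))]
  simp only [Matrix.sum_apply, Matrix.smul_apply, vecMulVec_apply, smul_eq_mul, mul_assoc]

lemma sum_trunc {α : Type*} [AddCommMonoid α] {r k : ℕ} (hkr : k ≤ r) (g : Fin r → α) :
    (∑ t : Fin r, if (t : ℕ) < k then g t else 0) = ∑ i : Fin k, g (Fin.castLE hkr i) := by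
  have h1 : (∑ t : Fin r, if (t : ℕ) < k then g t else 0)
      = ∑ j ∈ Finset.range r, (fun j : ℕ =>
          if h : j < r then (if j < k then g ⟨j, h⟩ else 0) else 0) j := by
    rw [← Fin.sum_univ_eq_sum_range (fun j : ℕ =>
      if h : j < r then (if j < k then g ⟨j, h⟩ else 0) else 0) r]
    exact Finset.sum_congr rfl fun t _ => by simp [t.isLt]
  have h2 : (∑ i : Fin k, g (Fin.castLE hkr i))
      = ∑ j ∈ Finset.range k, (fun j : ℕ =>
          if h : j < r then (if j < k then g ⟨j, h⟩ else 0) else 0) j := by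
    rw [← Fin.sum_univ_eq_sum_range (fun j : ℕ =>
      if h : j < r then (if j < k then g ⟨j, h⟩ else 0) else 0) k]
    refine Finset.sum_congr rfl fun i _ => ?_
    rw [dif_pos (lt_of_lt_of_le i.isLt hkr), if_pos i.isLt]
    rfl
  rw [h1, h2]
  symm
  apply Finset.sum_subset (Finset.range_subset_range.2 hkr)
  intro j _ hj
  have : ¬ j < k := fun h => hj (Finset.mem_range.2 h)
  simp [this]

theorem stmt_8 {m n r : ℕ} (A : Matrix (Fin m) (Fin n) ℝ) (M : Matrix (Fin n) (Fin n) ℝ)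
    (hM : M.PosDef) (U : Matrix (Fin m) (Fin m) ℝ) (V : Matrix (Fin n) (Fin n) ℝ)
    (σ : Fin r → ℝ) (hr : r = A.rank) (hrm : r ≤ m) (hrn : r ≤ n)
    (hU : Uᵀ * U = 1) (hV : Vᵀ * M * V = 1)
    (hσpos : ∀ i, 0 < σ i) (hσmono : ∀ i j : Fin r, i ≤ j → σ j ≤ σ i)
    (hSVD : Uᵀ * A * V = wsvdSigma m n r σ)
    (k : ℕ) (hk1 : 1 ≤ k) (hkr : k < r)
    (Ak : Matrix (Fin m) (Fin n) ℝ)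
    (hAk : Ak = ∑ i : Fin k, σ (Fin.castLE hkr.le i) •
      (vecMulVec (fun l => U l (Fin.castLE hrm (Fin.castLE hkr.le i)))
        (fun l => V l (Fin.castLE hrn (Fin.castLE hkr.le i))) * M)) :
    Ak.rank = k ∧ wnorm (A - Ak) M = σ ⟨k, hkr⟩ := by
  classical
  have hVW : V * (Vᵀ * M) = 1 := mul_eq_one_comm.mp hV
  have hUUT : U * Uᵀ = 1 := mul_eq_one_comm.mp hU
  have hdetU : IsUnit U.det := by
    apply IsUnit.of_mul_eq_one Uᵀ.det
    rw [← Matrix.det_mul, hUUT, Matrix.det_one]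
  have hdetW : IsUnit (Vᵀ * M).det := by
    apply IsUnit.of_mul_eq_one V.det
    rw [← Matrix.det_mul, hV, Matrix.det_one]
  have hA : A = U * wsvdSigma m n r σ * (Vᵀ * M) := by
    have h1 : A = (U * Uᵀ) * A * (V * (Vᵀ * M)) := by rw [hUUT, hVW, Matrix.one_mul, Matrix.mul_one]
    calc A = (U * Uᵀ) * A * (V * (Vᵀ * M)) := h1
    _ = U * (Uᵀ * A * V) * (Vᵀ * M) := by simp only [Matrix.mul_assoc]
    _ = U * wsvdSigma m n r σ * (Vᵀ * M) := by rw [hSVD]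
  -- key decomposition
  have key : ∀ τ : Fin r → ℝ, U * wsvdSigma m n r τ * (Vᵀ * M)
      = ∑ t : Fin r, τ t • (vecMulVec (fun l => U l (Fin.castLE hrm t))
          (fun l => V l (Fin.castLE hrn t)) * M) := by
    intro τ
    have : U * wsvdSigma m n r τ * (Vᵀ * M) = (U * wsvdSigma m n r τ * Vᵀ) * M := by
      simp only [Matrix.mul_assoc]
    rw [this, usv_core hrm hrn τ U V, Matrix.sum_mul]
    exact Finset.sum_congr rfl fun t _ => Matrix.smul_mul _ _ _
  set τk : Fin r → ℝ := fun i => if (i : ℕ) < k then σ i else 0 with hτk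
  set τ' : Fin r → ℝ := fun i => if (i : ℕ) < k then 0 else σ i with hτ'
  have hAk' : Ak = U * wsvdSigma m n r τk * (Vᵀ * M) := by
    rw [hAk, key τk]
    have : (∑ t : Fin r, τk t • (vecMulVec (fun l => U l (Fin.castLE hrm t))
        (fun l => V l (Fin.castLE hrn t)) * M))
        = ∑ t : Fin r, if (t : ℕ) < k then σ t • (vecMulVec (fun l => U l (Fin.castLE hrm t))
        (fun l => V l (Fin.castLE hrn t)) * M) else 0 := by
      refine Finset.sum_congr rfl fun t _ => ?_
      by_cases h : (t : ℕ) < k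
      · simp [hτk, h]
      · simp [hτk, h]
    rw [this, sum_trunc hkr.le]
  have hSsplit : wsvdSigma m n r σ = wsvdSigma m n r τk + wsvdSigma m n r τ' := by
    ext i j
    simp only [wsvdSigma, Matrix.of_apply, Matrix.add_apply]
    by_cases h : (i : ℕ) = (j : ℕ) ∧ (i : ℕ) < r
    · rw [dif_pos h, dif_pos h, dif_pos h]
      by_cases h2 : (i : ℕ) < k
      · simp [hτk, hτ', h2]
      · simp [hτk, hτ', h2]
    · rw [dif_neg h, dif_neg h, dif_neg h, add_zero]
  have hE : A - Ak = U * wsvdSigma m n r τ' * (Vᵀ * M) := by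
    rw [hA, hAk', hSsplit, Matrix.mul_add, Matrix.add_mul, add_sub_cancel_left]
  set s := σ ⟨k, hkr⟩ with hs
  have hspos : 0 < s := hσpos _
  have hUiso : ∀ z : Fin m → ℝ, (U *ᵥ z) ⬝ᵥ (U *ᵥ z) = z ⬝ᵥ z := by
    intro z
    rw [dotProduct_mulVec, ← mulVec_transpose, mulVec_mulVec, hU, one_mulVec]
  have hMt : Mᵀ = M := by have := hM.1; simpa [Matrix.IsHermitian] using this
  have hMViso : ∀ y : Fin n → ℝ, (V *ᵥ y) ⬝ᵥ (M *ᵥ (V *ᵥ y)) = y ⬝ᵥ y := by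
    intro y
    rw [mulVec_mulVec, dotProduct_mulVec, ← mulVec_transpose, mulVec_mulVec,
      Matrix.transpose_mul, hMt, hV, one_mulVec]
  have hdot_pos : ∀ y : Fin n → ℝ, y ≠ 0 → 0 < y ⬝ᵥ y := by
    intro y hy
    have hne : y ⬝ᵥ y ≠ 0 := fun h => hy (dotProduct_self_eq_zero.mp h)
    exact lt_of_le_of_ne (Finset.sum_nonneg fun i _ => mul_self_nonneg _) (Ne.symm hne)
  set D' : Fin n → ℝ := fun j => if h : (j : ℕ) < r then (τ' ⟨j, h⟩)^2 else 0 with hD'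
  have hdiag' : (wsvdSigma m n r τ')ᵀ * wsvdSigma m n r τ' = Matrix.diagonal D' :=
    sigmaT_mul_sigma hrm τ'
  have hdot' : ∀ y : Fin n → ℝ, (wsvdSigma m n r τ' *ᵥ y) ⬝ᵥ (wsvdSigma m n r τ' *ᵥ y)
      = ∑ j : Fin n, D' j * (y j)^2 := by
    intro y
    rw [dotProduct_mulVec, ← mulVec_transpose, mulVec_mulVec, hdiag']
    simp only [dotProduct, mulVec_diagonal]
    exact Finset.sum_congr rfl fun j _ => by ring
  have hD'le : ∀ j, D' j ≤ s^2 ∧ 0 ≤ D' j := by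
    intro j
    by_cases h1 : (j : ℕ) < r
    · simp only [hD', dif_pos h1, hτ']
      by_cases h2 : (j : ℕ) < k
      · simp [h2, sq_nonneg]
      · rw [if_neg h2]
        have hle : σ ⟨(j : ℕ), h1⟩ ≤ s := by
          apply hσmono ⟨k, hkr⟩ ⟨(j : ℕ), h1⟩
          simp only [Fin.mk_le_mk]
          omega
        exact ⟨pow_le_pow_left₀ (hσpos _).le hle 2, sq_nonneg _⟩
    · simp only [hD', dif_neg h1]
      exact ⟨sq_nonneg s, le_refl 0⟩
  have hmn : ∀ y : Fin n → ℝ, mnorm M (V *ᵥ y) = _root_.enorm y := by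
    intro y
    rw [mnorm, _root_.enorm]
    rw [hMViso]
  have hen : ∀ z : Fin m → ℝ, _root_.enorm (U *ᵥ z) = _root_.enorm z := by
    intro z
    rw [_root_.enorm, _root_.enorm, hUiso]
  have hub : ∀ x : Fin n → ℝ, x ≠ 0 → _root_.enorm ((A - Ak) *ᵥ x) / mnorm M x ≤ s := by
    intro x hx
    set y := (Vᵀ * M) *ᵥ x with hy
    have hxy : x = V *ᵥ y := by rw [hy, mulVec_mulVec, hVW, one_mulVec]
    have hy0 : y ≠ 0 := by intro h; apply hx; rw [hxy, h, mulVec_zero]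
    have hyy : 0 < y ⬝ᵥ y := hdot_pos y hy0
    have hEx : (A - Ak) *ᵥ x = U *ᵥ (wsvdSigma m n r τ' *ᵥ y) := by
      rw [hE, ← mulVec_mulVec, ← mulVec_mulVec]
    have h1 : _root_.enorm ((A - Ak) *ᵥ x) = _root_.enorm (wsvdSigma m n r τ' *ᵥ y) := by rw [hEx, hen]
    have h2 : mnorm M x = _root_.enorm y := by rw [hxy, hmn]
    rw [h1, h2]
    have h3 : _root_.enorm (wsvdSigma m n r τ' *ᵥ y) ≤ s * _root_.enorm y := by
      rw [_root_.enorm, _root_.enorm, hdot']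
      have hb : (∑ j : Fin n, D' j * (y j)^2) ≤ s^2 * (y ⬝ᵥ y) := by
        rw [dotProduct, Finset.mul_sum]
        refine Finset.sum_le_sum fun j _ => ?_
        have h4 : D' j * (y j)^2 ≤ s^2 * (y j)^2 :=
          mul_le_mul_of_nonneg_right (hD'le j).1 (sq_nonneg _)
        calc D' j * (y j)^2 ≤ s^2 * (y j)^2 := h4
        _ = s^2 * (y j * y j) := by ring
      calc Real.sqrt (∑ j : Fin n, D' j * (y j)^2) ≤ Real.sqrt (s^2 * (y ⬝ᵥ y)) :=
            Real.sqrt_le_sqrt hb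
      _ = s * Real.sqrt (y ⬝ᵥ y) := by rw [Real.sqrt_mul (sq_nonneg s), Real.sqrt_sq hspos.le]
    have hne : 0 < _root_.enorm y := Real.sqrt_pos.mpr hyy
    rw [div_le_iff₀ hne]
    exact h3
  set j0 : Fin n := ⟨k, lt_of_lt_of_le hkr hrn⟩ with hj0
  set y0 : Fin n → ℝ := Pi.single j0 1 with hy0def
  set x0 := V *ᵥ y0 with hx0def
  have hy00 : y0 ≠ 0 := by
    intro h
    have h2 := congrFun h j0
    rw [hy0def] at h2
    simp at h2
  have hWx0 : (Vᵀ * M) *ᵥ x0 = y0 := by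
    rw [hx0def, mulVec_mulVec, hV, one_mulVec]
  have hx00 : x0 ≠ 0 := by
    intro h
    apply hy00
    rw [← hWx0, h, mulVec_zero]
  have hy0dot : y0 ⬝ᵥ y0 = 1 := by
    rw [hy0def, dotProduct]
    rw [Finset.sum_eq_single j0]
    · simp
    · intro b _ hb
      rw [Pi.single_eq_of_ne hb, zero_mul]
    · simp
  have hmnx0 : mnorm M x0 = 1 := by rw [hx0def, hmn, _root_.enorm, hy0dot, Real.sqrt_one]
  have hDj0 : D' j0 = s^2 := by
    rw [hD']
    simp only [hj0]
    rw [dif_pos hkr]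
    simp [hτ', hs]
  have hsum0 : (∑ j : Fin n, D' j * (y0 j)^2) = s^2 := by
    rw [Finset.sum_eq_single j0]
    · rw [hy0def, Pi.single_eq_same, hDj0]; ring
    · intro b _ hb
      rw [hy0def, Pi.single_eq_of_ne hb]
      ring
    · simp
  have hx0en : _root_.enorm ((A - Ak) *ᵥ x0) = s := by
    have hEx : (A - Ak) *ᵥ x0 = U *ᵥ (wsvdSigma m n r τ' *ᵥ y0) := by
      rw [hE, ← mulVec_mulVec, ← mulVec_mulVec, hWx0]
    rw [hEx, hen, _root_.enorm, hdot', hsum0, Real.sqrt_sq hspos.le]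
  have hmemval : _root_.enorm ((A - Ak) *ᵥ x0) / mnorm M x0 = s := by rw [hx0en, hmnx0, div_one]
  have hnorm : wnorm (A - Ak) M = s := by
    rw [wnorm]
    apply le_antisymm
    · apply csSup_le
      · exact ⟨s, ⟨x0, hx00, hmemval.symm⟩⟩
      · rintro t ⟨x, hx, rfl⟩
        exact hub x hx
    · apply le_csSup
      · refine ⟨s, ?_⟩
        rintro t ⟨x, hx, rfl⟩
        exact hub x hx
      · exact ⟨x0, hx00, hmemval.symm⟩
  have hrank : Ak.rank = k := by
    rw [hAk', Matrix.rank_mul_eq_left_of_isUnit_det _ _ hdetW,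
      Matrix.rank_mul_eq_right_of_isUnit_det _ _ hdetU,
      ← Matrix.rank_transpose_mul_self, sigmaT_mul_sigma hrm τk, Matrix.rank_diagonal]
    have hiff : ∀ j : Fin n,
        ((if h : (j : ℕ) < r then (τk ⟨j, h⟩)^2 else 0) ≠ 0) ↔ (j : ℕ) < k := by
      intro j
      by_cases h1 : (j : ℕ) < r
      · rw [dif_pos h1]
        by_cases h2 : (j : ℕ) < k
        · simp [hτk, h2, (hσpos ⟨(j : ℕ), h1⟩).ne']
        · simp [hτk, h2]
      · rw [dif_neg h1]
        simp only [ne_eq, not_true, false_iff]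
        omega
    calc Fintype.card {j : Fin n // (if h : (j : ℕ) < r then (τk ⟨j, h⟩)^2 else 0) ≠ 0}
        = Fintype.card {j : Fin n // (j : ℕ) < k} :=
          Fintype.card_congr (Equiv.subtypeEquivRight hiff)
    _ = k := by
        have e2 : {j : Fin n // (j : ℕ) < k} ≃ Fin k :=
          { toFun := fun j => ⟨(j.1 : ℕ), j.2⟩
            invFun := fun i => ⟨⟨(i : ℕ), lt_of_lt_of_le i.isLt (le_trans hkr.le hrn)⟩, i.isLt⟩
            left_inv := fun j => Subtype.ext (Fin.ext rfl)
            right_inv := fun i => Fin.ext rfl }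
        rw [Fintype.card_congr e2, Fintype.card_fin]
  exact ⟨hrank, hnorm⟩
end

section
/- Let A ∈ ℝ^{m×n}, b ∈ ℝᵐ, and M ∈ ℝ^{n×n} symmetric positive definite, with weighted SVD Uᵀ A V = Σ, weighted singular values σ₁ ≥ … ≥ σ_r > 0, r = rank(A), and columns u_i of U and v_i of V. Then the set of all minimizers of ‖Ax − b‖₂ over x ∈ ℝⁿ equals the affine set x* + span{v_{r+1},…,v_n}, where x* := Σ_{i=1}^{r} (u_iᵀ b / σ_i) v_i. -/
open Matrix

/- ### Auxiliary lemmas -/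

lemma aux_dot_self_nonneg {k : ℕ} (z : Fin k → ℝ) : 0 ≤ z ⬝ᵥ z :=
  Finset.sum_nonneg fun i _ => mul_self_nonneg _

lemma aux_enorm_le_iff {k : ℕ} (a c : Fin k → ℝ) :
    _root_.enorm a ≤ _root_.enorm c ↔ a ⬝ᵥ a ≤ c ⬝ᵥ c := by
  unfold _root_.enorm
  rw [Real.sqrt_le_sqrt_iff (aux_dot_self_nonneg c)]

lemma aux_unit_dot {k : ℕ} (U : Matrix (Fin k) (Fin k) ℝ) (hU : Uᵀ * U = 1)
    (z : Fin k → ℝ) : (U *ᵥ z) ⬝ᵥ (U *ᵥ z) = z ⬝ᵥ z := by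
  rw [Matrix.dotProduct_mulVec, ← Matrix.mulVec_transpose, Matrix.mulVec_mulVec, hU,
    Matrix.one_mulVec]

lemma aux_sig_mulVec {m n r : ℕ} (hrn : r ≤ n) (σ : Fin r → ℝ) (c : Fin n → ℝ) (i : Fin m) :
    (wsvdSigma m n r σ *ᵥ c) i
      = if h : (i : ℕ) < r then σ ⟨i, h⟩ * c ⟨i, h.trans_le hrn⟩ else 0 := by
  classical
  by_cases h : (i : ℕ) < r
  · rw [dif_pos h]
    have key : ∀ j : Fin n, j ≠ ⟨i, h.trans_le hrn⟩ →
        wsvdSigma m n r σ i j * c j = 0 := by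
      intro j hj
      have : ¬ ((i : ℕ) = (j : ℕ) ∧ (i : ℕ) < r) := by
        rintro ⟨h1, -⟩
        exact hj (Fin.ext h1.symm)
      simp [wsvdSigma, this]
    calc (wsvdSigma m n r σ *ᵥ c) i
        = ∑ j : Fin n, wsvdSigma m n r σ i j * c j := rfl
      _ = wsvdSigma m n r σ i ⟨i, h.trans_le hrn⟩ * c ⟨i, h.trans_le hrn⟩ :=
          Finset.sum_eq_single _ (fun j _ hj => key j hj) (by simp)
      _ = σ ⟨i, h⟩ * c ⟨i, h.trans_le hrn⟩ := by
          simp [wsvdSigma, h]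
  · rw [dif_neg h]
    have : ∀ j : Fin n, wsvdSigma m n r σ i j * c j = 0 := by
      intro j
      have : ¬ ((i : ℕ) = (j : ℕ) ∧ (i : ℕ) < r) := fun hc => h hc.2
      simp [wsvdSigma, this]
    show ∑ j : Fin n, wsvdSigma m n r σ i j * c j = 0
    exact Finset.sum_eq_zero fun j _ => this j

/-- The submodule of vectors vanishing on coordinates `< r`. -/
def lowZero (n r : ℕ) : Submodule ℝ (Fin n → ℝ) where
  carrier := {d | ∀ j : Fin n, (j : ℕ) < r → d j = 0}
  add_mem' := by intro a c ha hc j hj; simp [ha j hj, hc j hj]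
  zero_mem' := by intro j hj; rfl
  smul_mem' := by intro t a ha j hj; simp [ha j hj]

theorem stmt_9 {m n r : ℕ} (A : Matrix (Fin m) (Fin n) ℝ) (b : Fin m → ℝ)
    (M : Matrix (Fin n) (Fin n) ℝ)
    (hM : M.PosDef) (U : Matrix (Fin m) (Fin m) ℝ) (V : Matrix (Fin n) (Fin n) ℝ)
    (σ : Fin r → ℝ) (hr : r = A.rank) (hrm : r ≤ m) (hrn : r ≤ n)
    (hU : Uᵀ * U = 1) (hV : Vᵀ * M * V = 1)
    (hσpos : ∀ i, 0 < σ i) (hσmono : ∀ i j : Fin r, i ≤ j → σ j ≤ σ i)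
    (hSVD : Uᵀ * A * V = wsvdSigma m n r σ)
    (xstar : Fin n → ℝ)
    (hxstar : xstar = ∑ i : Fin r,
      (((fun l => U l (Fin.castLE hrm i)) ⬝ᵥ b) / σ i) • (fun l => V l (Fin.castLE hrn i))) :
    {x : Fin n → ℝ | ∀ y : Fin n → ℝ, _root_.enorm (A.mulVec x - b) ≤ _root_.enorm (A.mulVec y - b)} =
      (fun w => xstar + w) ''
        (Submodule.span ℝ {x : Fin n → ℝ | ∃ j : Fin n, r ≤ (j : ℕ) ∧ x = fun l => V l j} :
          Set (Fin n → ℝ)) := by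
  classical
  set S : Matrix (Fin m) (Fin n) ℝ := wsvdSigma m n r σ with hS
  set W : Matrix (Fin n) (Fin n) ℝ := Vᵀ * M with hW
  set β : Fin m → ℝ := Uᵀ *ᵥ b with hβ
  have hWV : W * V = 1 := hV
  have hVW : V * W = 1 := mul_eq_one_comm.mp hWV
  have hUUT : U * Uᵀ = 1 := mul_eq_one_comm.mp hU
  -- A = U * S * W
  have hA : A = U * S * W := by
    calc A = (U * Uᵀ) * A * (V * W) := by rw [hUUT, hVW, Matrix.one_mul, Matrix.mul_one]
      _ = U * (Uᵀ * A * V) * W := by simp only [Matrix.mul_assoc]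
      _ = U * S * W := by rw [hSVD]
  have hb : b = U *ᵥ β := by
    rw [hβ, Matrix.mulVec_mulVec, hUUT, Matrix.one_mulVec]
  -- residual identity
  have hres : ∀ x : Fin n → ℝ, A *ᵥ x - b = U *ᵥ (S *ᵥ (W *ᵥ x) - β) := by
    intro x
    rw [Matrix.mulVec_sub, ← hb, hA, ← Matrix.mulVec_mulVec, ← Matrix.mulVec_mulVec]
  -- the objective at the level of c-coordinates
  set F : (Fin n → ℝ) → ℝ := fun c => (S *ᵥ c - β) ⬝ᵥ (S *ᵥ c - β) with hF
  have hobj : ∀ x : Fin n → ℝ, (A *ᵥ x - b) ⬝ᵥ (A *ᵥ x - b) = F (W *ᵥ x) := by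
    intro x
    rw [hres x, aux_unit_dot U hU]
  set F0 : ℝ := ∑ i : Fin m, (if (i : ℕ) < r then 0 else (β i) ^ 2) with hF0
  -- expansion of F
  have hFsum : ∀ c : Fin n → ℝ, F c = ∑ i : Fin m,
      (if h : (i : ℕ) < r then (σ ⟨i, h⟩ * c ⟨i, h.trans_le hrn⟩ - β i) ^ 2
       else (β i) ^ 2) := by
    intro c
    have : ∀ i : Fin m, (S *ᵥ c - β) i * (S *ᵥ c - β) i
        = (if h : (i : ℕ) < r then (σ ⟨i, h⟩ * c ⟨i, h.trans_le hrn⟩ - β i) ^ 2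
           else (β i) ^ 2) := by
      intro i
      have hi : (S *ᵥ c - β) i = (S *ᵥ c) i - β i := rfl
      rw [hi, hS, aux_sig_mulVec hrn]
      by_cases h : (i : ℕ) < r
      · simp [h, sq]
      · simp [h, sq]
    exact Finset.sum_congr rfl fun i _ => this i
  -- F0 is a lower bound
  have hFge : ∀ c, F0 ≤ F c := by
    intro c
    rw [hFsum c, hF0]
    refine Finset.sum_le_sum fun i _ => ?_
    by_cases h : (i : ℕ) < r
    · simp only [if_pos h, dif_pos h]
      positivity
    · simp [h]
  -- equality characterization
  have hFeq : ∀ c, F c = F0 ↔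
      ∀ k : Fin r, σ k * c (Fin.castLE hrn k) = β (Fin.castLE hrm k) := by
    intro c
    rw [hFsum c, hF0]
    rw [← sub_eq_zero, ← Finset.sum_sub_distrib]
    rw [Finset.sum_eq_zero_iff_of_nonneg]
    · constructor
      · intro h k
        have hk : ((Fin.castLE hrm k : Fin m) : ℕ) < r := k.2
        have := h (Fin.castLE hrm k) (Finset.mem_univ _)
        rw [dif_pos hk, if_pos hk, sub_zero] at this
        have h2 := pow_eq_zero_iff (n := 2) (by norm_num) |>.mp this
        have h3 := sub_eq_zero.mp h2
        convert h3 using 2 <;> congr 1 <;> apply Fin.ext <;> rfl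
      · intro h i _
        by_cases hi : (i : ℕ) < r
        · rw [dif_pos hi, if_pos hi, sub_zero]
          have hk := h ⟨i, hi⟩
          have e1 : (Fin.castLE hrn ⟨(i : ℕ), hi⟩ : Fin n) = ⟨i, hi.trans_le hrn⟩ := rfl
          have e2 : (Fin.castLE hrm ⟨(i : ℕ), hi⟩ : Fin m) = i := Fin.ext rfl
          rw [e1, e2] at hk
          rw [hk]
          simp
        · rw [dif_neg hi, if_neg hi]
          ring
    · intro i _
      by_cases hi : (i : ℕ) < r
      · rw [dif_pos hi, if_pos hi, sub_zero]; positivity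
      · rw [dif_neg hi, if_neg hi]; simp
  -- columns of V
  set col : Fin n → (Fin n → ℝ) := fun j => fun l => V l j with hcol
  have hWcol : ∀ j : Fin n, W *ᵥ col j = fun i => if i = j then 1 else 0 := by
    intro j
    funext i
    have : (W *ᵥ col j) i = ∑ l, W i l * V l j := rfl
    rw [this]
    have : ∑ l, W i l * V l j = (W * V) i j := rfl
    rw [this, hWV, Matrix.one_apply]
  -- coefficients of xstar
  have hcoef : ∀ i : Fin r, ((fun l => U l (Fin.castLE hrm i)) ⬝ᵥ b) = β (Fin.castLE hrm i) := by
    intro i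
    simp [hβ, Matrix.mulVec, dotProduct, Matrix.transpose_apply]
  have hxstar' : xstar = ∑ i : Fin r,
      (β (Fin.castLE hrm i) / σ i) • col (Fin.castLE hrn i) := by
    rw [hxstar]
    exact Finset.sum_congr rfl fun i _ => by rw [hcoef i]
  -- W *ᵥ xstar computed
  have hWxs : W *ᵥ xstar = fun j : Fin n =>
      if h : (j : ℕ) < r then β (Fin.castLE hrm ⟨j, h⟩) / σ ⟨j, h⟩ else 0 := by
    rw [hxstar']
    have expand : W *ᵥ (∑ i : Fin r, (β (Fin.castLE hrm i) / σ i) • col (Fin.castLE hrn i))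
        = ∑ i : Fin r, (β (Fin.castLE hrm i) / σ i) • (W *ᵥ col (Fin.castLE hrn i)) := by
      show W.mulVecLin _ = _
      rw [map_sum]
      exact Finset.sum_congr rfl fun i _ => by rw [LinearMap.map_smul]; rfl
    rw [expand]
    funext j
    rw [Finset.sum_apply]
    simp only [Pi.smul_apply, hWcol, smul_eq_mul]
    by_cases h : (j : ℕ) < r
    · rw [dif_pos h]
      rw [Finset.sum_eq_single ⟨(j : ℕ), h⟩]
      · have : (Fin.castLE hrn ⟨(j : ℕ), h⟩ : Fin n) = j := Fin.ext rfl
        rw [this, if_pos rfl, mul_one]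
      · intro k _ hk
        have : j ≠ Fin.castLE hrn k := by
          intro hc
          apply hk
          apply Fin.ext
          have : (j : ℕ) = (k : ℕ) := by rw [hc]; rfl
          exact this.symm ▸ rfl
        rw [if_neg this, mul_zero]
      · simp
    · rw [dif_neg h]
      refine Finset.sum_eq_zero fun k _ => ?_
      have : j ≠ Fin.castLE hrn k := by
        intro hc
        apply h
        rw [hc]
        exact k.2
      rw [if_neg this, mul_zero]
  have hWxs_k : ∀ k : Fin r, (W *ᵥ xstar) (Fin.castLE hrn k) = β (Fin.castLE hrm k) / σ k := by
    intro k
    simp only [hWxs]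
    have hk : ((Fin.castLE hrn k : Fin n) : ℕ) < r := k.2
    rw [dif_pos hk]
    congr 1 <;> apply Fin.ext <;> rfl
  have hσne : ∀ k : Fin r, σ k ≠ 0 := fun k => (hσpos k).ne'
  -- xstar achieves the minimum
  have hFxs : F (W *ᵥ xstar) = F0 := by
    rw [hFeq]
    intro k
    rw [hWxs_k k, mul_div_cancel₀ _ (hσne k)]
  -- characterize minimizers
  have hmin : ∀ x : Fin n → ℝ,
      (∀ y : Fin n → ℝ, _root_.enorm (A *ᵥ x - b) ≤ _root_.enorm (A *ᵥ y - b)) ↔ F (W *ᵥ x) = F0 := by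
    intro x
    constructor
    · intro h
      refine le_antisymm ?_ (hFge _)
      have := (aux_enorm_le_iff _ _).mp (h xstar)
      rw [hobj x, hobj xstar, hFxs] at this
      exact this
    · intro h y
      rw [aux_enorm_le_iff, hobj x, hobj y, h]
      exact hFge _
  -- span membership: forward inclusion tool
  set Sp : Set (Fin n → ℝ) := {x : Fin n → ℝ | ∃ j : Fin n, r ≤ (j : ℕ) ∧ x = fun l => V l j}
    with hSp
  have hspan_low : ∀ w ∈ Submodule.span ℝ Sp, (W.mulVecLin) w ∈ lowZero n r := by
    intro w hw
    have : Submodule.span ℝ Sp ≤ (lowZero n r).comap W.mulVecLin := by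
      rw [Submodule.span_le]
      rintro x ⟨j, hj, rfl⟩
      intro i hi
      have h2 : (W.mulVecLin fun l => V l j) = fun i => if i = j then 1 else 0 := hWcol j
      rw [h2]
      have : i ≠ j := by
        intro hc
        rw [hc] at hi
        exact absurd hj (not_le.mpr hi)
      exact if_neg this
    exact this hw
  -- main set equality
  -- vectors with low coordinates zero map into the span
  have hVd : ∀ d : Fin n → ℝ, d ∈ lowZero n r → V *ᵥ d ∈ Submodule.span ℝ Sp := by
    intro d hd
    have hdsum : d = ∑ j : Fin n, Pi.single j (d j) := (Finset.univ_sum_single d).symm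
    have : V *ᵥ d = ∑ j : Fin n, d j • col j := by
      conv_lhs => rw [hdsum]
      show V.mulVecLin _ = _
      rw [map_sum]
      refine Finset.sum_congr rfl fun j _ => ?_
      show V *ᵥ Pi.single j (d j) = d j • col j
      rw [Matrix.mulVec_single]
      funext i
      simp [hcol, mul_comm]
    rw [this]
    refine Submodule.sum_mem _ fun j _ => ?_
    by_cases hj : (j : ℕ) < r
    · rw [hd j hj, zero_smul]
      exact Submodule.zero_mem _
    · exact Submodule.smul_mem _ _ (Submodule.subset_span ⟨j, not_lt.mp hj, rfl⟩)
  -- main set equality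
  ext x
  simp only [Set.mem_setOf_eq, Set.mem_image, SetLike.mem_coe]
  rw [hmin x, hFeq]
  constructor
  · intro h
    refine ⟨V *ᵥ ((W *ᵥ x) - (W *ᵥ xstar)), ?_, ?_⟩
    · refine hVd _ ?_
      intro j hj
      have hk := h ⟨(j : ℕ), hj⟩
      have e1 : (Fin.castLE hrn ⟨(j : ℕ), hj⟩ : Fin n) = j := Fin.ext rfl
      rw [e1] at hk
      have hx : (W *ᵥ x) j = β (Fin.castLE hrm ⟨(j : ℕ), hj⟩) / σ ⟨(j : ℕ), hj⟩ := by
        rw [eq_div_iff (hσne _), mul_comm]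
        exact hk
      have hxs : (W *ᵥ xstar) j = β (Fin.castLE hrm ⟨(j : ℕ), hj⟩) / σ ⟨(j : ℕ), hj⟩ := by
        simp only [hWxs]
        rw [dif_pos hj]
      show (W *ᵥ x - W *ᵥ xstar) j = 0
      rw [Pi.sub_apply, hx, hxs, sub_self]
    · rw [Matrix.mulVec_sub, Matrix.mulVec_mulVec, hVW, Matrix.one_mulVec,
        Matrix.mulVec_mulVec, hVW, Matrix.one_mulVec]
      abel
  · rintro ⟨w, hw, rfl⟩
    intro k
    rw [Matrix.mulVec_add, Pi.add_apply, hWxs_k k]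
    have h0 : (W *ᵥ w) (Fin.castLE hrn k) = 0 := by
      have := hspan_low w hw (Fin.castLE hrn k) k.2
      rwa [Matrix.mulVecLin_apply] at this
    rw [h0, add_zero, mul_div_cancel₀ _ (hσne k)]
end

section
/- Let A ∈ ℝ^{m×n}, b ∈ ℝᵐ, and M ∈ ℝ^{n×n} symmetric positive definite, with weighted SVD Uᵀ A V = Σ, weighted singular values σ₁ ≥ … ≥ σ_r > 0, r = rank(A). Then the vector x* := Σ_{i=1}^{r} (u_iᵀ b / σ_i) v_i is the unique element of minimal M-norm ‖x‖_M in the set of minimizers of ‖Ax − b‖₂ over x ∈ ℝⁿ; that is, every minimizer x of ‖Ax − b‖₂ satisfies ‖x‖_M ≥ ‖x*‖_M, with equality if and only if x = x*. -/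
open Matrix

lemma dot_self_nonneg' {k : ℕ} (x : Fin k → ℝ) : 0 ≤ x ⬝ᵥ x :=
  Finset.sum_nonneg fun _ _ => mul_self_nonneg _

lemma aux_dot {p q : ℕ} (P : Matrix (Fin p) (Fin q) ℝ) (N : Matrix (Fin p) (Fin p) ℝ)
    (hN : Nᵀ = N) (h : Pᵀ * N * P = 1) (c : Fin q → ℝ) :
    (P.mulVec c) ⬝ᵥ N.mulVec (P.mulVec c) = c ⬝ᵥ c := by
  rw [Matrix.mulVec_mulVec, Matrix.dotProduct_mulVec, ← Matrix.mulVec_transpose,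
      Matrix.transpose_mul, hN, Matrix.mulVec_mulVec, h, Matrix.one_mulVec]

lemma sigma_mulVec {m n r : ℕ} (hrn : r ≤ n) (σ : Fin r → ℝ) (c : Fin n → ℝ) :
    (wsvdSigma m n r σ).mulVec c =
      fun i : Fin m => if h : (i : ℕ) < r then σ ⟨(i : ℕ), h⟩ * c ⟨(i : ℕ), h.trans_le hrn⟩
        else 0 := by
  funext i
  simp only [mulVec, dotProduct, wsvdSigma, Matrix.of_apply]
  by_cases h : (i : ℕ) < r
  · rw [dif_pos h, Finset.sum_eq_single (⟨(i : ℕ), h.trans_le hrn⟩ : Fin n)]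
    · rw [dif_pos ⟨rfl, h⟩]
    · intro j _ hj
      rw [dif_neg, zero_mul]
      rintro ⟨h1, -⟩
      exact hj (Fin.ext h1.symm)
    · intro hmem
      exact absurd (Finset.mem_univ _) hmem
  · rw [dif_neg h]
    apply Finset.sum_eq_zero
    intro j _
    rw [dif_neg, zero_mul]
    rintro ⟨-, h2⟩
    exact h h2

lemma sum_fin_dite {n r : ℕ} (hrn : r ≤ n) (f : (j : Fin n) → (j : ℕ) < r → ℝ) :
    ∑ j : Fin n, (if h : (j : ℕ) < r then f j h else 0)
      = ∑ i : Fin r, f (Fin.castLE hrn i) i.isLt := by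
  rw [← Finset.sum_subset (Finset.subset_univ (Finset.univ.map (Fin.castLEEmb hrn)))]
  · rw [Finset.sum_map]
    apply Finset.sum_congr rfl
    intro i _
    exact dif_pos i.isLt
  · intro j _ hj
    rw [dif_neg]
    intro h
    exact hj (Finset.mem_map.2 ⟨⟨(j : ℕ), h⟩, Finset.mem_univ _, Fin.ext rfl⟩)

theorem stmt_10 {m n r : ℕ} (A : Matrix (Fin m) (Fin n) ℝ) (b : Fin m → ℝ)
    (M : Matrix (Fin n) (Fin n) ℝ)
    (hM : M.PosDef) (U : Matrix (Fin m) (Fin m) ℝ) (V : Matrix (Fin n) (Fin n) ℝ)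
    (σ : Fin r → ℝ) (hr : r = A.rank) (hrm : r ≤ m) (hrn : r ≤ n)
    (hU : Uᵀ * U = 1) (hV : Vᵀ * M * V = 1)
    (hσpos : ∀ i, 0 < σ i) (hσmono : ∀ i j : Fin r, i ≤ j → σ j ≤ σ i)
    (hSVD : Uᵀ * A * V = wsvdSigma m n r σ)
    (xstar : Fin n → ℝ)
    (hxstar : xstar = ∑ i : Fin r,
      (((fun l => U l (Fin.castLE hrm i)) ⬝ᵥ b) / σ i) • (fun l => V l (Fin.castLE hrn i))) :
    (∀ y : Fin n → ℝ, _root_.enorm (A.mulVec xstar - b) ≤ _root_.enorm (A.mulVec y - b)) ∧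
    ∀ x : Fin n → ℝ, (∀ y : Fin n → ℝ, _root_.enorm (A.mulVec x - b) ≤ _root_.enorm (A.mulVec y - b)) →
      mnorm M xstar ≤ mnorm M x ∧ (mnorm M x = mnorm M xstar ↔ x = xstar) := by
  have hMs : Mᵀ = M := hM.isHermitian.eq
  have hUUT : U * Uᵀ = 1 := mul_eq_one_comm.mp hU
  have hVW : V * (Vᵀ * M) = 1 := mul_eq_one_comm.mp hV
  set W : Matrix (Fin n) (Fin n) ℝ := Vᵀ * M with hWdef
  set d : Fin m → ℝ := Uᵀ.mulVec b with hd
  have hbd : U.mulVec d = b := by rw [hd, Matrix.mulVec_mulVec, hUUT, Matrix.one_mulVec]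
  have hA : A = U * wsvdSigma m n r σ * W := by
    have h1 : U * (Uᵀ * A * V) = A * V := by
      rw [← Matrix.mul_assoc, ← Matrix.mul_assoc, hUUT, Matrix.one_mul]
    rw [← hSVD, h1, Matrix.mul_assoc, hVW, Matrix.mul_one]
  -- coordinates
  have hVc : ∀ x : Fin n → ℝ, V.mulVec (W.mulVec x) = x := fun x => by
    rw [Matrix.mulVec_mulVec, hVW, Matrix.one_mulVec]
  have hcV : ∀ c : Fin n → ℝ, W.mulVec (V.mulVec c) = c := fun c => by
    rw [Matrix.mulVec_mulVec, hWdef, hV, Matrix.one_mulVec]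
  -- the S map
  set S : (Fin n → ℝ) → (Fin m → ℝ) := fun c i =>
    if h : (i : ℕ) < r then σ ⟨(i : ℕ), h⟩ * c ⟨(i : ℕ), h.trans_le hrn⟩ else 0 with hSdef
  have hS : ∀ c : Fin n → ℝ, (wsvdSigma m n r σ).mulVec c = S c := fun c =>
    sigma_mulVec hrn σ c
  -- residual formula
  have hres : ∀ x : Fin n → ℝ, A.mulVec x - b = U.mulVec (S (W.mulVec x) - d) := by
    intro x
    rw [Matrix.mulVec_sub, hbd, ← hS, Matrix.mulVec_mulVec, Matrix.mulVec_mulVec, hA,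
      Matrix.mul_assoc]
  -- enorm of residual
  have hen : ∀ x : Fin n → ℝ, _root_.enorm (A.mulVec x - b)
      = Real.sqrt ((S (W.mulVec x) - d) ⬝ᵥ (S (W.mulVec x) - d)) := by
    intro x
    have h1 := aux_dot U 1 Matrix.transpose_one (by rw [Matrix.mul_one]; exact hU)
      (S (W.mulVec x) - d)
    rw [Matrix.one_mulVec] at h1
    rw [_root_.enorm, hres x, h1]
  -- mnorm formula
  have hmn : ∀ c : Fin n → ℝ, mnorm M (V.mulVec c) = Real.sqrt (c ⬝ᵥ c) := fun c => by
    rw [mnorm, aux_dot V M hMs hV]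
  -- cstar
  set cstar : Fin n → ℝ := fun j =>
    if h : (j : ℕ) < r then d ⟨(j : ℕ), h.trans_le hrm⟩ / σ ⟨(j : ℕ), h⟩ else 0 with hcstar
  have hxstarV : xstar = V.mulVec cstar := by
    rw [hxstar]
    funext l
    rw [Finset.sum_apply]
    have : (V.mulVec cstar) l = ∑ j : Fin n,
        (if h : (j : ℕ) < r then V l j * (d ⟨(j : ℕ), h.trans_le hrm⟩ / σ ⟨(j : ℕ), h⟩)
          else 0) := by
      simp only [mulVec, dotProduct, hcstar, mul_dite, mul_zero]
    rw [this, sum_fin_dite hrn]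
    apply Finset.sum_congr rfl
    intro i _
    have hdi : ((fun l => U l (Fin.castLE hrm i)) ⬝ᵥ b) = d (Fin.castLE hrm i) := by
      simp [hd, mulVec, dotProduct, Matrix.transpose_apply]
    have h1 : (⟨((Fin.castLE hrn i : Fin n) : ℕ), by simpa using i.isLt.trans_le hrm⟩ : Fin m)
        = Fin.castLE hrm i := by
      apply Fin.ext; rfl
    have h2 : (⟨((Fin.castLE hrn i : Fin n) : ℕ), by simpa using i.isLt⟩ : Fin r) = i := by
      apply Fin.ext; rfl
    simp only [Pi.smul_apply, smul_eq_mul, hdi, h1, h2]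
    ring
  have hccxstar : W.mulVec xstar = cstar := by rw [hxstarV, hcV]
  -- pointwise terms
  have hScstar : ∀ i : Fin m, S cstar i - d i = if (i : ℕ) < r then 0 else -(d i) := by
    intro i
    by_cases h : (i : ℕ) < r
    · rw [if_pos h]
      have : S cstar i = d i := by
        rw [hSdef]
        simp only
        rw [dif_pos h, hcstar]
        simp only
        rw [dif_pos h]
        rw [mul_div_cancel₀ _ (ne_of_gt (hσpos _))]
      rw [this, sub_self]
    · rw [if_neg h]
      have : S cstar i = 0 := by rw [hSdef]; simp only; rw [dif_neg h]
      rw [this, zero_sub]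
  -- pointwise comparison of squared residual terms
  have hterm : ∀ (c : Fin n → ℝ) (i : Fin m),
      (S cstar i - d i) * (S cstar i - d i) ≤ (S c i - d i) * (S c i - d i) := by
    intro c i
    by_cases h : (i : ℕ) < r
    · rw [hScstar i, if_pos h, mul_zero]
      exact mul_self_nonneg _
    · have hc : ∀ c' : Fin n → ℝ, S c' i = 0 := by
        intro c'; rw [hSdef]; simp only; rw [dif_neg h]
      rw [hScstar i, if_neg h, hc c, zero_sub]
  -- Q monotone
  have hQle : ∀ c : Fin n → ℝ,
      (S cstar - d) ⬝ᵥ (S cstar - d) ≤ (S c - d) ⬝ᵥ (S c - d) := by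
    intro c
    apply Finset.sum_le_sum
    intro i _
    exact hterm c i
  constructor
  · intro y
    rw [hen, hen, hccxstar]
    exact Real.sqrt_le_sqrt (hQle _)
  · intro x hx
    set c : Fin n → ℝ := W.mulVec x with hc
    have hxV : x = V.mulVec c := (hVc x).symm
    -- minimality gives Q c ≤ Q cstar
    have hQc : (S c - d) ⬝ᵥ (S c - d) ≤ (S cstar - d) ⬝ᵥ (S cstar - d) := by
      have h1 := hx xstar
      rw [hen, hen, hccxstar, ← hc] at h1
      have h2 := pow_le_pow_left₀ (Real.sqrt_nonneg _) h1 2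
      rwa [Real.sq_sqrt (dot_self_nonneg' _), Real.sq_sqrt (dot_self_nonneg' _)] at h2
    -- each term equal
    have hzero : ∀ i : Fin m,
        (S c i - d i) * (S c i - d i) - (S cstar i - d i) * (S cstar i - d i) = 0 := by
      have hsum : ∑ i : Fin m,
          ((S c i - d i) * (S c i - d i) - (S cstar i - d i) * (S cstar i - d i)) = 0 := by
        rw [Finset.sum_sub_distrib]
        have := sub_nonpos.mpr hQc
        have h2 : (0:ℝ) ≤ (S c - d) ⬝ᵥ (S c - d) - (S cstar - d) ⬝ᵥ (S cstar - d) :=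
          sub_nonneg.mpr (hQle c)
        have h3 : (S c - d) ⬝ᵥ (S c - d) - (S cstar - d) ⬝ᵥ (S cstar - d) = 0 :=
          le_antisymm (sub_nonpos.mpr hQc) h2
        simpa [dotProduct] using h3
      intro i
      have := (Finset.sum_eq_zero_iff_of_nonneg
        (fun i _ => sub_nonneg.mpr (hterm c i))).mp hsum i (Finset.mem_univ i)
      linarith [this]
    -- conclude c agrees with cstar on first r coordinates
    have hagree : ∀ j : Fin n, (j : ℕ) < r → c j = cstar j := by
      intro j hj
      have hjm : (j : ℕ) < m := hj.trans_le hrm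
      have hz := hzero ⟨(j : ℕ), hjm⟩
      rw [hScstar ⟨(j : ℕ), hjm⟩] at hz
      simp only [if_pos hj, mul_zero, sub_zero] at hz
      have hS0 : S c ⟨(j : ℕ), hjm⟩ - d ⟨(j : ℕ), hjm⟩ = 0 := by
        have := mul_self_eq_zero.mp hz
        exact this
      rw [hSdef] at hS0
      simp only at hS0
      rw [dif_pos hj] at hS0
      have hjeq : (⟨((⟨(j : ℕ), hjm⟩ : Fin m) : ℕ), hj.trans_le hrn⟩ : Fin n) = j :=
        Fin.ext rfl
      rw [hjeq] at hS0
      have hσne : σ ⟨(j : ℕ), hj⟩ ≠ 0 := ne_of_gt (hσpos _)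
      rw [hcstar]
      simp only
      rw [dif_pos hj]
      field_simp at hS0 ⊢
      linarith [hS0]
    -- norm comparison
    have hnormsq : cstar ⬝ᵥ cstar ≤ c ⬝ᵥ c := by
      apply Finset.sum_le_sum
      intro j _
      by_cases h : (j : ℕ) < r
      · rw [hagree j h]
      · have : cstar j = 0 := by rw [hcstar]; simp only; rw [dif_neg h]
        rw [this, mul_zero]
        exact mul_self_nonneg _
    have hmnx : mnorm M x = Real.sqrt (c ⬝ᵥ c) := by rw [hxV, hmn]
    have hmnxs : mnorm M xstar = Real.sqrt (cstar ⬝ᵥ cstar) := by rw [hxstarV, hmn]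
    refine ⟨by rw [hmnx, hmnxs]; exact Real.sqrt_le_sqrt hnormsq, ?_, ?_⟩
    · intro heq
      rw [hmnx, hmnxs] at heq
      have hsq : c ⬝ᵥ c = cstar ⬝ᵥ cstar := by
        have := congrArg (fun t => t ^ 2) heq
        simpa [Real.sq_sqrt (dot_self_nonneg' c), Real.sq_sqrt (dot_self_nonneg' cstar)]
          using this
      have hall : ∀ j : Fin n, c j * c j - cstar j * cstar j = 0 := by
        have hsum : ∑ j : Fin n, (c j * c j - cstar j * cstar j) = 0 := by
          rw [Finset.sum_sub_distrib]
          simpa [dotProduct] using sub_eq_zero.mpr hsq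
        intro j
        refine (Finset.sum_eq_zero_iff_of_nonneg ?_).mp hsum j (Finset.mem_univ j)
        intro j _
        by_cases h : (j : ℕ) < r
        · rw [hagree j h]; simp
        · have : cstar j = 0 := by rw [hcstar]; simp only; rw [dif_neg h]
          rw [this, mul_zero, sub_zero]
          exact mul_self_nonneg _
      have hceq : c = cstar := by
        funext j
        by_cases h : (j : ℕ) < r
        · exact hagree j h
        · have h0 : cstar j = 0 := by rw [hcstar]; simp only; rw [dif_neg h]
          have := hall j
          rw [h0, mul_zero, sub_zero] at this
          rw [h0]
          exact mul_self_eq_zero.mp this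
      rw [hxV, hceq, ← hxstarV]
    · intro heq
      rw [heq]
end
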